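/- Let D be a finite homomorphism-homogeneous reflexive improper bidirectionally disconnected digraph, and let S, T be distinct θ(D)-classes with S ⇄ T. With γ_T(S) defined by (x,y) ∈ γ_T(S) iff no t ∈ T satisfies x → t → y or y → t → x, the following are equivalent for x, y ∈ S: (i) (x,y) ∈ γ_T(S); (ii) for all t ∈ T, (x → t and y → t) or (t → x and t → y); (iii) there exists t ∈ T with (x → t and y → t) or (t → x and t → y). -/

import Mathlib

/-- A digraph `(V, E)` is homomorphism-homogeneous if every homomorphism between finitely
induced subdigraphs extends to an endomorphism. -/
def IsHomHom {V : Type*} (E : V → V → Prop) : Prop :=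
  ∀ (U : Set V) (f : V → V), U.Finite →
    (∀ x ∈ U, ∀ y ∈ U, E x y → E (f x) (f y)) →
    ∃ g : V → V, (∀ x y, E x y → E (g x) (g y)) ∧ ∀ x ∈ U, g x = f x

/-- The bidirectional connectedness relation `θ(D)`: the equivalence closure of the
double-edge relation `⇄`. -/
def Theta {V : Type*} (E : V → V → Prop) : V → V → Prop :=
  Relation.EqvGen (fun a b => E a b ∧ E b a)

/-- `E` is improper: neither symmetric nor antisymmetric. -/
def Improper {V : Type*} (E : V → V → Prop) : Prop :=
  (∃ x y, x ≠ y ∧ E x y ∧ E y x) ∧ (∃ x y, E x y ∧ ¬ E y x)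

/-- `D` is bidirectionally disconnected: there is an edge between two distinct
`θ(D)`-classes. -/
def BidirDisconnected {V : Type*} (E : V → V → Prop) : Prop :=
  ∃ x y, ¬ Theta E x y ∧ E x y

/-!
Homomorphism-homogeneity lets us collapse a vertex `t` onto a vertex `u` while fixing `x`, as
long as the edges between `x` and `t` survive. If some `y` with `x θ y` has `y → t` and `u → y`,
the image of `y` ends up joined to `u` by a double edge, so `x θ u`. For `x, y ∈ S` and
`t, u ∈ T` this rules out a common out-neighbour (or in-neighbour) `t` of `x, y` together with a
path `x → u → y`, which gives (iii) ⇒ (i). A variant of the same collapse shows that every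
`s ∈ S` and `t ∈ T` are adjacent; since there are no double edges between `S` and `T`, each
`t ∈ T` then either separates `x` and `y` or lies on the same side of both, which is (i) ⇔ (ii).
-/

section

variable {V : Type*} {E : V → V → Prop} {a b c : V}

theorem Theta.refl (a : V) : Theta E a a := Relation.EqvGen.refl a

theorem Theta.symm (h : Theta E a b) : Theta E b a := Relation.EqvGen.symm a b h

theorem Theta.trans (h₁ : Theta E a b) (h₂ : Theta E b c) : Theta E a c :=
  Relation.EqvGen.trans a b c h₁ h₂

theorem Theta.of_edges (h₁ : E a b) (h₂ : E b a) : Theta E a b :=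
  Relation.EqvGen.rel a b ⟨h₁, h₂⟩

theorem not_theta_of_not_theta {d : V} (h : ¬ Theta E a b) (hc : Theta E c a)
    (hd : Theta E d b) : ¬ Theta E c d :=
  fun hcd => h (hc.symm.trans (hcd.trans hd))

theorem theta_flip : Theta (flip E) = Theta E := by
  unfold Theta flip
  congr 1
  funext a b
  exact propext and_comm

theorem Theta.map {g : V → V} (hg : ∀ a b, E a b → E (g a) (g b)) (h : Theta E a b) :
    Theta E (g a) (g b) := by
  induction h with
  | rel p q hpq => exact .of_edges (hg _ _ hpq.1) (hg _ _ hpq.2)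
  | refl p => exact .refl _
  | symm p q _ ih => exact ih.symm
  | trans p q r _ _ ih₁ ih₂ => exact ih₁.trans ih₂

theorem Theta.iff_of_edges {P : V → Prop} (hP : ∀ a b, E a b → E b a → P a → P b)
    (h : Theta E a b) : P a ↔ P b := by
  induction h with
  | rel p q hpq => exact ⟨hP p q hpq.1 hpq.2, hP q p hpq.2 hpq.1⟩
  | refl p => exact Iff.rfl
  | symm p q _ ih => exact ih.symm
  | trans p q r _ _ ih₁ ih₂ => exact ih₁.trans ih₂

theorem IsHomHom.flip (hhh : IsHomHom E) : IsHomHom (flip E) := by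
  intro U f hU hf
  obtain ⟨g, hg, hgU⟩ := hhh U f hU fun x hx y hy hxy => hf y hy x hx hxy
  exact ⟨g, fun x y hxy => hg y x hxy, hgU⟩

namespace IsHomHom

variable {x y t u : V}

theorem exists_collapse (hrefl : ∀ v, E v v) (hhh : IsHomHom E) (hxu : E x t → E x u)
    (htx : ¬ E t x) :
    ∃ g : V → V, (∀ a b, E a b → E (g a) (g b)) ∧ g x = x ∧ g t = u ∧ g u = u := by
  classical
  have hxt : x ≠ t := by rintro rfl; exact htx (hrefl x)
  let f : V → V := fun v => if v = t then u else v
  have hf : ∀ a ∈ ({x, t, u} : Set V), ∀ b ∈ ({x, t, u} : Set V), E a b → E (f a) (f b) := by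
    intro a ha b hb hab
    simp only [Set.mem_insert_iff, Set.mem_singleton_iff] at ha hb
    rcases ha with rfl | rfl | rfl <;> rcases hb with rfl | rfl | rfl <;>
      simp_all [f, eq_comm]
  obtain ⟨g, hg, hgf⟩ := hhh _ f (Set.toFinite _) hf
  refine ⟨g, hg, ?_, ?_, ?_⟩ <;> simp [hgf, f, hxt]

theorem theta_of_collapse (hrefl : ∀ v, E v v) (hhh : IsHomHom E) (hxu : E x t → E x u)
    (htx : ¬ E t x) (hyt : E y t) (huy : E u y) (hxy : Theta E x y) : Theta E x u := by
  obtain ⟨g, hg, hgx, hgt, hgu⟩ := hhh.exists_collapse hrefl hxu htx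
  have hgyu : Theta E (g y) u := .of_edges (hgt ▸ hg y t hyt) (hgu ▸ hg u y huy)
  exact (hgx ▸ hxy.map hg).trans hgyu

theorem theta_of_edge_of_not_adj (hrefl : ∀ v, E v v) (hhh : IsHomHom E) {p p' q : V}
    (hpq : E p q) (hpp' : E p p') (hp'p : E p' p) (hp'q : ¬ E p' q) (hqp' : ¬ E q p') :
    Theta E p q := by
  classical
  have hne : p' ≠ q := by rintro rfl; exact hp'q (hrefl p')
  let f : V → V := fun v => if v = p' then q else p
  have hf : ∀ a ∈ ({p', q} : Set V), ∀ b ∈ ({p', q} : Set V), E a b → E (f a) (f b) := by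
    intro a ha b hb hab
    simp only [Set.mem_insert_iff, Set.mem_singleton_iff] at ha hb
    rcases ha with rfl | rfl <;> rcases hb with rfl | rfl <;> simp_all [f]
  obtain ⟨g, hg, hgf⟩ := hhh _ f (Set.toFinite _) hf
  have hgp' : g p' = q := by simp [hgf, f]
  have hgq : g q = p := by simp [hgf, f, hne.symm]
  -- `g p ⇄ q` and `g p → p`, so collapsing `q` onto `g p` while fixing `p'` gives `p' θ g p`.
  have hgpq : Theta E (g p) q := .of_edges (hgp' ▸ hg p p' hpp') (hgp' ▸ hg p' p hp'p)
  have hp'gp : Theta E p' (g p) :=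
    theta_of_collapse hrefl hhh (fun h => absurd h hp'q) hqp' hpq (hgq ▸ hg p q hpq)
      (.of_edges hp'p hpp')
  exact (Theta.of_edges hpp' hp'p).trans (hp'gp.trans hgpq)

theorem adj_of_edges (hrefl : ∀ v, E v v) (hhh : IsHomHom E) {p p' q : V}
    (hpp' : E p p') (hp'p : E p' p) (hpq : ¬ Theta E p q) (hadj : E p q ∨ E q p) :
    E p' q ∨ E q p' := by
  by_contra! h
  rcases hadj with hadj | hadj
  · exact hpq (theta_of_edge_of_not_adj hrefl hhh hadj hpp' hp'p h.1 h.2)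
  · exact hpq <| theta_flip ▸
      theta_of_edge_of_not_adj (E := _root_.flip E) hrefl hhh.flip hadj hp'p hpp' h.2 h.1

theorem adj_of_theta (hrefl : ∀ v, E v v) (hhh : IsHomHom E) {p p' q q' : V}
    (hp : Theta E p p') (hq : Theta E q q') (hpq : ¬ Theta E p q) (hadj : E p q ∨ E q p) :
    E p' q' ∨ E q' p' := by
  have transfer {p p' q : V} (hp : Theta E p p') (hpq : ¬ Theta E p q)
      (hadj : E p q ∨ E q p) : ¬ Theta E p' q ∧ (E p' q ∨ E q p') :=
    (hp.iff_of_edges (P := fun p => ¬ Theta E p q ∧ (E p q ∨ E q p))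
      (fun _ _ hab hba h => ⟨fun h' => h.1 ((Theta.of_edges hab hba).trans h'),
        adj_of_edges hrefl hhh hab hba h.1 h.2⟩)).1 ⟨hpq, hadj⟩
  obtain ⟨hp'q, hadj'⟩ := transfer hp hpq hadj
  exact (transfer hq (fun h => hp'q h.symm) hadj'.symm).2.symm

theorem not_path_of_common_out (hrefl : ∀ v, E v v) (hhh : IsHomHom E) {x₀ y₀ : V}
    (hxy₀ : ¬ Theta E x₀ y₀) (hx : Theta E x x₀) (hy : Theta E y x₀) (ht : Theta E t y₀)
    (hu : Theta E u y₀) (hxt : E x t) (hyt : E y t) : ¬ (E x u ∧ E u y) := fun ⟨hxu, huy⟩ =>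
  not_theta_of_not_theta hxy₀ hx hu <| theta_of_collapse hrefl hhh (fun _ => hxu)
    (fun htx => not_theta_of_not_theta hxy₀ hx ht (.of_edges hxt htx)) hyt huy (hx.trans hy.symm)

theorem not_path_of_common_in (hrefl : ∀ v, E v v) (hhh : IsHomHom E) {x₀ y₀ : V}
    (hxy₀ : ¬ Theta E x₀ y₀) (hx : Theta E x x₀) (hy : Theta E y x₀) (ht : Theta E t y₀)
    (hu : Theta E u y₀) (htx : E t x) (hty : E t y) : ¬ (E x u ∧ E u y) := by
  rw [← theta_flip] at hxy₀ hx hy ht hu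
  exact fun ⟨hxu, huy⟩ => hhh.flip.not_path_of_common_out (E := _root_.flip E) hrefl
    hxy₀ hy hx ht hu hty htx ⟨huy, hxu⟩

end IsHomHom

end

theorem stmt_17_general {V : Type*} (E : V → V → Prop)
    (hrefl : ∀ x, E x x)
    (hhh : IsHomHom E)
    (x₀ y₀ : V) (hxy : ¬ Theta E x₀ y₀)
    (hST : ∃ s t, Theta E s x₀ ∧ Theta E t y₀ ∧ E s t) :
    ∀ x y, Theta E x x₀ → Theta E y x₀ →
      ((¬ ∃ t, Theta E t y₀ ∧ ((E x t ∧ E t y) ∨ (E y t ∧ E t x))) ↔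
        (∀ t, Theta E t y₀ → (E x t ∧ E y t) ∨ (E t x ∧ E t y))) ∧
      ((¬ ∃ t, Theta E t y₀ ∧ ((E x t ∧ E t y) ∨ (E y t ∧ E t x))) ↔
        (∃ t, Theta E t y₀ ∧ ((E x t ∧ E y t) ∨ (E t x ∧ E t y)))) := by
  intro x y hx hy
  have hadj : ∀ {s t}, Theta E s x₀ → Theta E t y₀ → E s t ∨ E t s := fun hs ht => by
    obtain ⟨s₀, t₀, hs₀, ht₀, hst₀⟩ := hST
    exact hhh.adj_of_theta hrefl (hs₀.trans hs.symm) (ht₀.trans ht.symm)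
      (not_theta_of_not_theta hxy hs₀ ht₀) (.inl hst₀)
  have hsep : ∀ {t}, Theta E t y₀ →
      (((E x t ∧ E t y) ∨ (E y t ∧ E t x)) ↔ ¬ ((E x t ∧ E y t) ∨ (E t x ∧ E t y))) := by
    intro t ht
    have := hadj hx ht; have := hadj hy ht
    have := fun h₁ h₂ => not_theta_of_not_theta hxy hx ht (.of_edges h₁ h₂)
    have := fun h₁ h₂ => not_theta_of_not_theta hxy hy ht (.of_edges h₁ h₂)
    tauto
  have hi_ii : (¬ ∃ t, Theta E t y₀ ∧ ((E x t ∧ E t y) ∨ (E y t ∧ E t x))) ↔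
      (∀ t, Theta E t y₀ → (E x t ∧ E y t) ∨ (E t x ∧ E t y)) := by
    simp only [not_exists, not_and]
    exact forall₂_congr fun t ht => by rw [hsep ht, not_not]
  have hiii_i : (∃ t, Theta E t y₀ ∧ ((E x t ∧ E y t) ∨ (E t x ∧ E t y))) →
      ¬ ∃ u, Theta E u y₀ ∧ ((E x u ∧ E u y) ∨ (E y u ∧ E u x)) := by
    rintro ⟨t, ht, ⟨hxt, hyt⟩ | ⟨htx, hty⟩⟩ ⟨u, hu, hxuy | hyux⟩
    · exact hhh.not_path_of_common_out hrefl hxy hx hy ht hu hxt hyt hxuy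
    · exact hhh.not_path_of_common_out hrefl hxy hy hx ht hu hyt hxt hyux
    · exact hhh.not_path_of_common_in hrefl hxy hx hy ht hu htx hty hxuy
    · exact hhh.not_path_of_common_in hrefl hxy hy hx ht hu hty htx hyux
  exact ⟨hi_ii, hi_ii.trans
    ⟨fun h => ⟨y₀, .refl y₀, h y₀ (.refl y₀)⟩, fun h => hi_ii.1 (hiii_i h)⟩⟩

/-- With `S = [x₀]`, `T = [y₀]` distinct `θ(D)`-classes with edges in both
directions in a finite homomorphism-homogeneous reflexive improper bidirectionally
disconnected digraph, for `x, y ∈ S` the following are equivalent: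
(i) `(x,y) ∈ γ_T(S)` (no `t ∈ T` with `x → t → y` or `y → t → x`);
(ii) for all `t ∈ T`, (`x → t` and `y → t`) or (`t → x` and `t → y`);
(iii) for some `t ∈ T`, (`x → t` and `y → t`) or (`t → x` and `t → y`). -/
theorem stmt_17 {V : Type*} [Fintype V] (E : V → V → Prop)
    (hrefl : ∀ x, E x x) (himp : Improper E) (hbd : BidirDisconnected E)
    (hhh : IsHomHom E)
    (x₀ y₀ : V) (hxy : ¬ Theta E x₀ y₀)
    (hST : ∃ s t, Theta E s x₀ ∧ Theta E t y₀ ∧ E s t)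
    (hTS : ∃ s t, Theta E s x₀ ∧ Theta E t y₀ ∧ E t s) :
    ∀ x y, Theta E x x₀ → Theta E y x₀ →
      ((¬ ∃ t, Theta E t y₀ ∧ ((E x t ∧ E t y) ∨ (E y t ∧ E t x))) ↔
        (∀ t, Theta E t y₀ → (E x t ∧ E y t) ∨ (E t x ∧ E t y))) ∧
      ((¬ ∃ t, Theta E t y₀ ∧ ((E x t ∧ E t y) ∨ (E y t ∧ E t x))) ↔
        (∃ t, Theta E t y₀ ∧ ((E x t ∧ E y t) ∨ (E t x ∧ E t y)))) :=
  stmt_17_general E hrefl hhh x₀ y₀ hxy hST
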